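/- arXiv:1908.02191 — 2 statements merged into one kernel-verified Lean document; each statement's English description precedes it below -/
import Mathlib

section
/- With A_m, B_m, K₀ and w₀ defined as follows — A_m = −(2/(mπ)³)·((−1)^m − 1)·(e^{−mπ} − 1)/(e^{mπ} − e^{−mπ}), B_m = (2/(mπ)³)·((−1)^m − 1)·(e^{mπ} − 1)/(e^{mπ} − e^{−mπ}), K₀ = 28.4541538, and w₀(x,y) = K₀·[ −(1/4)(y²−y) − (1/4)(x²−x) + (1/2)∑_{m=1}^{∞} sin(mπx)(A_m e^{mπy} + B_m e^{−mπy}) + (1/2)∑_{m=1}^{∞} sin(mπy)(A_m e^{mπx} + B_m e^{−mπx}) ] — the series defining w₀ converge at every point of the closed unit square, and w₀(x,y) = 0 for every (x,y) on the boundary of [0,1]×[0,1] (i.e. whenever x ∈ {0,1} or y ∈ {0,1}). -/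
/-!
On an edge `x ∈ {0, 1}` every term of the first series vanishes, since `sin (m π x) = 0`.
The coefficients are chosen so that `A_m e^{mπs} + B_m e^{-mπs}`, which equals
`c_m (sinh (mπs) + sinh (mπ(1 - s))) / sinh (mπ)`, takes the value `c_m` at `s = 0` and `s = 1`,
where `c_m` is the `m`-th Fourier sine coefficient of `(t² - t) / 2` on `[0, 1]`. The second series
is then that sine series, and its sum cancels the quadratic term. The `sinh` form also bounds
the `m`-th terms by `2 |c_m| = O(m⁻³)`, which gives convergence. The edges `y ∈ {0, 1}` follow by
the symmetry `w₀ (x, y) = w₀ (y, x)`.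
-/

open Real

/-- Fourier coefficient `A_m`. -/
noncomputable def Acoef (m : ℕ) : ℝ :=
  -(2 / (m * π) ^ 3) * ((-1 : ℝ) ^ m - 1) *
    (Real.exp (-(m * π)) - 1) / (Real.exp (m * π) - Real.exp (-(m * π)))

/-- Fourier coefficient `B_m`. -/
noncomputable def Bcoef (m : ℕ) : ℝ :=
  (2 / (m * π) ^ 3) * ((-1 : ℝ) ^ m - 1) *
    (Real.exp (m * π) - 1) / (Real.exp (m * π) - Real.exp (-(m * π)))

/-- The constant `K₀`. -/
noncomputable def K₀ : ℝ := 28.4541538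

/-- `m`-th term of the first series: `sin(mπx)(A_m e^{mπy} + B_m e^{−mπy})`. -/
noncomputable def term1 (m : ℕ) (q : ℝ × ℝ) : ℝ :=
  Real.sin (m * π * q.1) *
    (Acoef m * Real.exp (m * π * q.2) + Bcoef m * Real.exp (-(m * π * q.2)))

/-- `m`-th term of the second series: `sin(mπy)(A_m e^{mπx} + B_m e^{−mπx})`. -/
noncomputable def term2 (m : ℕ) (q : ℝ × ℝ) : ℝ :=
  Real.sin (m * π * q.2) *
    (Acoef m * Real.exp (m * π * q.1) + Bcoef m * Real.exp (-(m * π * q.1)))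

/-- The duct Poiseuille profile `w₀`. -/
noncomputable def w₀ (q : ℝ × ℝ) : ℝ :=
  K₀ * (-(1 / 4) * (q.2 ^ 2 - q.2) - (1 / 4) * (q.1 ^ 2 - q.1) +
    (1 / 2) * ∑' m : ℕ, term1 (m + 1) q + (1 / 2) * ∑' m : ℕ, term2 (m + 1) q)

open Set

lemma bernoulliFun_three (x : ℝ) : bernoulliFun 3 x = x ^ 3 - 3 / 2 * x ^ 2 + 1 / 2 * x := by
  simp [bernoulliFun, Polynomial.bernoulli_def, Finset.sum_range_succ,
    bernoulli_eq_bernoulli'_of_ne_one]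
  ring

noncomputable def sineCoef (m : ℕ) : ℝ := 2 / (m * π) ^ 3 * ((-1 : ℝ) ^ m - 1)

noncomputable def modeProfile (m : ℕ) (s : ℝ) : ℝ :=
  Acoef m * exp (m * π * s) + Bcoef m * exp (-(m * π * s))

lemma term1_eq (m : ℕ) (q : ℝ × ℝ) : term1 m q = sin (m * π * q.1) * modeProfile m q.2 := rfl

lemma term2_eq (m : ℕ) (q : ℝ × ℝ) : term2 m q = sin (m * π * q.2) * modeProfile m q.1 := rfl

/-- The cubic Bernoulli series `∑ sin (2πnu) / n³` at `u = t/2 + 1/2` minus the one at `u = t/2`: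
the half shift contributes the factor `(-1)^n`. -/
lemma hasSum_sin_mul_sineCoef {t : ℝ} (ht : t ∈ Icc (0 : ℝ) 1) :
    HasSum (fun n : ℕ => sin (n * π * t) * sineCoef n) ((t ^ 2 - t) / 2) := by
  have hu : t / 2 ∈ Icc (0 : ℝ) 1 := ⟨by linarith [ht.1], by linarith [ht.2]⟩
  have hu' : t / 2 + 1 / 2 ∈ Icc (0 : ℝ) 1 := ⟨by linarith [ht.1], by linarith [ht.2]⟩
  have H := ((hasSum_one_div_nat_pow_mul_sin one_ne_zero hu').sub
    (hasSum_one_div_nat_pow_mul_sin one_ne_zero hu)).mul_left (2 / π ^ 3)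
  convert! H.congr_fun (g := fun n : ℕ => sin (n * π * t) * sineCoef n) fun n => ?_ using 1
  · change _ = 2 / π ^ 3 * (_ * bernoulliFun 3 _ - _ * bernoulliFun 3 _)
    rw [bernoulliFun_three, bernoulliFun_three]
    norm_num [Nat.factorial]
    field_simp
    ring
  · have hshift : sin (2 * π * n * (t / 2 + 1 / 2)) = (-1) ^ n * sin (n * π * t) := by
      rw [show 2 * π * n * (t / 2 + 1 / 2) = n * π * t + n * π by ring, sin_add,
        sin_nat_mul_pi, cos_nat_mul_pi]
      ring
    rw [hshift, sineCoef, show 2 * π * n * (t / 2) = n * π * t by ring]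
    ring

lemma modeProfile_eq_sinh {m : ℕ} (hm : m ≠ 0) (s : ℝ) :
    modeProfile m s =
      sineCoef m * (sinh (m * π * s) + sinh (m * π * (1 - s))) / sinh (m * π) := by
  set a : ℝ := m * π with ha
  have hD : exp (-a) < exp a := exp_lt_exp.2 (by linarith [show 0 < a by positivity])
  have hexp₁ : exp (a * (1 - s)) = exp a * exp (-(a * s)) := by rw [← exp_add]; ring_nf
  have hexp₂ : exp (-(a * (1 - s))) = exp (a * s) * exp (-a) := by rw [← exp_add]; ring_nf
  rw [modeProfile, Acoef, Bcoef, sineCoef, ← ha, sinh_eq, sinh_eq, sinh_eq, hexp₁, hexp₂]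
  field_simp [(sub_pos.2 hD).ne']
  ring

lemma modeProfile_of_edge {m : ℕ} (hm : m ≠ 0) {s : ℝ} (hs : s = 0 ∨ s = 1) :
    modeProfile m s = sineCoef m := by
  have hsinh : sinh (m * π) ≠ 0 := (sinh_pos_iff.2 (by positivity)).ne'
  rcases hs with rfl | rfl <;> simp [modeProfile_eq_sinh hm, hsinh]

lemma abs_modeProfile_le {m : ℕ} (hm : m ≠ 0) {s : ℝ} (hs : s ∈ Icc (0 : ℝ) 1) :
    |modeProfile m s| ≤ 2 * |sineCoef m| := by
  set a : ℝ := m * π with ha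
  have ha0 : 0 < a := by positivity
  have hsinh : 0 < sinh a := sinh_pos_iff.2 ha0
  have h₁ : 0 ≤ sinh (a * s) := sinh_nonneg_iff.2 (by nlinarith [hs.1])
  have h₂ : 0 ≤ sinh (a * (1 - s)) := sinh_nonneg_iff.2 (by nlinarith [hs.2])
  have h₁' : sinh (a * s) ≤ sinh a := sinh_le_sinh.2 (by nlinarith [hs.2])
  have h₂' : sinh (a * (1 - s)) ≤ sinh a := sinh_le_sinh.2 (by nlinarith [hs.1])
  rw [modeProfile_eq_sinh hm, ← ha, abs_div, abs_mul, abs_of_pos hsinh,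
    abs_of_nonneg (add_nonneg h₁ h₂), div_le_iff₀ hsinh]
  nlinarith [abs_nonneg (sineCoef m)]

lemma abs_sineCoef_le (m : ℕ) : |sineCoef m| ≤ 4 / (m * π) ^ 3 := by
  have hsign : |(-1 : ℝ) ^ m - 1| ≤ 2 := by
    rcases neg_one_pow_eq_or ℝ m with h | h <;> norm_num [h]
  rw [sineCoef, abs_mul, abs_of_nonneg (by positivity : (0 : ℝ) ≤ 2 / (m * π) ^ 3)]
  calc 2 / (m * π) ^ 3 * |(-1 : ℝ) ^ m - 1| ≤ 2 / (m * π) ^ 3 * 2 := by gcongr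
    _ = 4 / (m * π) ^ 3 := by ring

lemma summable_sin_mul_modeProfile (u : ℝ) {v : ℝ} (hv : v ∈ Icc (0 : ℝ) 1) :
    Summable fun m : ℕ => sin (((m + 1 : ℕ) : ℝ) * π * u) * modeProfile (m + 1) v := by
  have hbound : Summable fun n : ℕ => 8 / ((n : ℝ) * π) ^ 3 :=
    ((summable_nat_pow_inv.2 (by norm_num : 1 < 3)).mul_left (8 / π ^ 3)).congr fun n => by ring
  refine ((summable_nat_add_iff 1).2 hbound).of_norm_bounded fun m => ?_
  rw [norm_mul, norm_eq_abs, norm_eq_abs]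
  calc |sin (((m + 1 : ℕ) : ℝ) * π * u)| * |modeProfile (m + 1) v|
      ≤ 1 * (2 * (4 / (((m + 1 : ℕ) : ℝ) * π) ^ 3)) := by
        gcongr
        · exact abs_sin_le_one _
        · exact (abs_modeProfile_le m.succ_ne_zero hv).trans (by gcongr; exact abs_sineCoef_le _)
    _ = 8 / (((m + 1 : ℕ) : ℝ) * π) ^ 3 := by ring

lemma tsum_sin_mul_modeProfile_of_edge {s t : ℝ} (hs : s = 0 ∨ s = 1) (ht : t ∈ Icc (0 : ℝ) 1) :
    ∑' m : ℕ, sin (((m + 1 : ℕ) : ℝ) * π * t) * modeProfile (m + 1) s = (t ^ 2 - t) / 2 := by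
  have h := (hasSum_nat_add_iff' 1).2 (hasSum_sin_mul_sineCoef ht)
  simp only [Finset.range_one, Finset.sum_singleton, Nat.cast_zero, zero_mul, sin_zero,
    sub_zero] at h
  simp_rw [modeProfile_of_edge (Nat.succ_ne_zero _) hs]
  exact h.tsum_eq

lemma sin_nat_mul_pi_mul_of_edge (m : ℕ) {t : ℝ} (ht : t = 0 ∨ t = 1) : sin (m * π * t) = 0 := by
  rcases ht with rfl | rfl <;> simp [sin_nat_mul_pi]

lemma w₀_swap (x y : ℝ) : w₀ (y, x) = w₀ (x, y) := by
  simp only [w₀, term1_eq, term2_eq]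
  ring

lemma w₀_eq_zero_of_edge {x y : ℝ} (hx : x = 0 ∨ x = 1) (hy : y ∈ Icc (0 : ℝ) 1) :
    w₀ (x, y) = 0 := by
  have h₁ : ∑' m : ℕ, term1 (m + 1) (x, y) = 0 := by
    simp only [term1_eq, sin_nat_mul_pi_mul_of_edge _ hx, zero_mul, tsum_zero]
  have h₂ : ∑' m : ℕ, term2 (m + 1) (x, y) = (y ^ 2 - y) / 2 :=
    tsum_sin_mul_modeProfile_of_edge hx hy
  have hx₂ : x ^ 2 - x = 0 := by rcases hx with rfl | rfl <;> norm_num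
  rw [w₀, h₁, h₂, hx₂]
  ring

/-- the two series defining `w₀` converge at every point of the closed
unit square, and `w₀` vanishes on the boundary of `[0,1]×[0,1]` (the no-slip
condition on the duct wall). -/
theorem w0_boundary_zero :
    (∀ x y : ℝ, x ∈ Set.Icc (0 : ℝ) 1 → y ∈ Set.Icc (0 : ℝ) 1 →
      Summable (fun m : ℕ => term1 (m + 1) (x, y)) ∧
      Summable (fun m : ℕ => term2 (m + 1) (x, y))) ∧
    (∀ x y : ℝ, x ∈ Set.Icc (0 : ℝ) 1 → y ∈ Set.Icc (0 : ℝ) 1 →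
      (x = 0 ∨ x = 1 ∨ y = 0 ∨ y = 1) → w₀ (x, y) = 0) := by
  refine ⟨fun x y hx hy => ⟨summable_sin_mul_modeProfile x hy, summable_sin_mul_modeProfile y hx⟩,
    fun x y hx hy hedge => ?_⟩
  rcases or_assoc.2 hedge with hx' | hy'
  · exact w₀_eq_zero_of_edge hx' hy
  · rw [← w₀_swap]
    exact w₀_eq_zero_of_edge hy' hx
end

section
/- Let L > 0, ν > 0 and Ω = (0,1)×(0,1)×(0,L) ⊂ ℝ³. Let u₀ : ℝ³ → ℝ³ be continuously differentiable on a neighborhood of the closure of Ω with ∇·u₀ = 0 on Ω, with all first partial derivatives of u₀ bounded in absolute value by N on Ω, and with u₀³(x,y,L) ≥ 0 for all (x,y) ∈ [0,1]×[0,1]. Then there exist constants γ > 0, α₀ > 0 and δ > 0 such that: for every measurable function τ : Ω → ℝ with 0 ≤ τ(x) ≤ δ for a.e. x ∈ Ω, and every vector field u : ℝ³ → ℝ³ that is twice continuously differentiable on a neighborhood of the closure of Ω, vanishes on the inlet (z = 0) and the walls (x ∈ {0,1}, y ∈ {0,1}), and satisfies the inverse-estimate inequality ν²∫_Ω τ|Δu|²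 dV ≤ ν∫_Ω |∇u|² dV, one has: ν∫_Ω |∇u|² dV + ∫_Ω (u₀·∇u)·u dV + ∫_Ω (u·∇u₀)·u dV + γ∫_Ω |u|² dV − ν∫_Ω τ (Δu)·(u₀·∇u) dV + ∫_Ω τ |u₀·∇u|² dV + ∫_Ω τ ((u·∇u₀)·(u₀·∇u)) dV + γ∫_Ω τ u·(u₀·∇u) dV ≥ α₀·( ∫_Ω |u|² dV + ∫_Ω |∇u|² dV ) + (1/6)∫_Ω τ |u₀·∇u|² dV. -/
open MeasureTheory

/-- Partial derivative in the `i`-th coordinate direction of a scalar field on `ℝ³`. -/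
noncomputable def pd (i : Fin 3) (f : (Fin 3 → ℝ) → ℝ) (x : Fin 3 → ℝ) : ℝ :=
  fderiv ℝ f x (Pi.single i 1)

/-!
Pointwise, Young's inequality absorbs every indefinite term of the SUPG integrand. The convective
terms `(u₀·∇u)·u` and `(u·∇u₀)·u` cost `ν/4 |∇u|²` plus a multiple of `|u|²` governed by
`sup |u₀|` and `N`, which `γ` pays for. The `τ`-weighted cross terms cost `5/6 τ|u₀·∇u|²`,
`ν²/2 τ|Δu|²` and a multiple of `τ|u|²` that is at most `|u|²` once `δ` is small. After
integration, the inverse estimate trades `ν²/2 ∫τ|Δu|²` for `ν/2 ∫|∇u|²`, which leaves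
`ν/4 ∫|∇u|² + ∫|u|² + 1/6 ∫τ|u₀·∇u|²`.
-/

open Finset

theorem abs_sum_mul_le_young {ι : Type*} (s : Finset ι) {ε : ℝ} (hε : 0 < ε) (x y : ι → ℝ) :
    |∑ i ∈ s, x i * y i| ≤ (ε * ∑ i ∈ s, x i ^ 2 + (∑ i ∈ s, y i ^ 2) / ε) / 2 := by
  have pointwise : ∀ a b : ℝ, |a * b| ≤ (ε * a ^ 2 + b ^ 2 / ε) / 2 := fun a b => by
    have hsub : (ε * a ^ 2 + b ^ 2 / ε) / 2 - a * b = (ε * a - b) ^ 2 / (2 * ε) := by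
      field_simp; ring
    have hadd : (ε * a ^ 2 + b ^ 2 / ε) / 2 + a * b = (ε * a + b) ^ 2 / (2 * ε) := by
      field_simp; ring
    have : 0 ≤ (ε * a - b) ^ 2 / (2 * ε) := by positivity
    have : 0 ≤ (ε * a + b) ^ 2 / (2 * ε) := by positivity
    rw [abs_le]; constructor <;> linarith
  calc |∑ i ∈ s, x i * y i| ≤ ∑ i ∈ s, |x i * y i| := abs_sum_le_sum_abs _ _
    _ ≤ ∑ i ∈ s, (ε * x i ^ 2 + y i ^ 2 / ε) / 2 := sum_le_sum fun i _ => pointwise _ _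
    _ = _ := by rw [← sum_div, sum_add_distrib, ← mul_sum, ← sum_div]

theorem sum_sq_sum_mul_le {ι κ : Type*} (s : Finset ι) (t : Finset κ) (v : ι → ℝ)
    (P : ι → κ → ℝ) :
    ∑ i ∈ t, (∑ k ∈ s, v k * P k i) ^ 2 ≤ (∑ k ∈ s, v k ^ 2) * ∑ k ∈ s, ∑ i ∈ t, P k i ^ 2 :=
  calc ∑ i ∈ t, (∑ k ∈ s, v k * P k i) ^ 2
      ≤ ∑ i ∈ t, (∑ k ∈ s, v k ^ 2) * ∑ k ∈ s, P k i ^ 2 :=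
        sum_le_sum fun i _ => sum_mul_sq_le_sq_mul_sq s v (P · i)
    _ = _ := by rw [← mul_sum, sum_comm]

theorem sum_sq_le_card_mul_sq {ι : Type*} (s : Finset ι) {f : ι → ℝ} {K : ℝ}
    (h : ∀ i ∈ s, |f i| ≤ K) : ∑ i ∈ s, f i ^ 2 ≤ #s * K ^ 2 :=
  (sum_le_card_nsmul s _ _ fun i hi =>
    sq_abs (f i) ▸ pow_le_pow_left₀ (abs_nonneg _) (h i hi) 2).trans_eq (nsmul_eq_mul _ _)

theorem supg_density_lower_bound {ι : Type*} (s : Finset ι) {ν A B γ δ t S : ℝ}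
    {a w c q : ι → ℝ} (hν : 0 < ν) (hA : 0 ≤ A) (hB : 0 ≤ B)
    (hγ : (A + 1) / ν + (B + 1) / 2 + 2 ≤ γ) (hδ : 3 * δ * (B + γ ^ 2) ≤ 2)
    (ht : 0 ≤ t) (htδ : t ≤ δ) (hS : 0 ≤ S)
    (hw : ∑ i ∈ s, w i ^ 2 ≤ A * S) (hc : ∑ i ∈ s, c i ^ 2 ≤ B * ∑ i ∈ s, a i ^ 2) :
    3 * ν / 4 * S + ∑ i ∈ s, a i ^ 2 + 1 / 6 * (t * ∑ i ∈ s, w i ^ 2)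
        - ν ^ 2 / 2 * (t * ∑ i ∈ s, q i ^ 2)
      ≤ ν * S + ∑ i ∈ s, w i * a i + ∑ i ∈ s, c i * a i + γ * ∑ i ∈ s, a i ^ 2
        - ν * (t * ∑ i ∈ s, q i * w i) + t * ∑ i ∈ s, w i ^ 2
        + t * ∑ i ∈ s, c i * w i + γ * (t * ∑ i ∈ s, a i * w i) := by
  set M := ∑ i ∈ s, a i ^ 2
  set W := ∑ i ∈ s, w i ^ 2
  set C := ∑ i ∈ s, c i ^ 2
  set Q := ∑ i ∈ s, q i ^ 2
  have hM : 0 ≤ M := by positivity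
  have hγ0 : 0 < γ := by
    have : 0 < (A + 1) / ν := by positivity
    linarith
  have hwa : -(ν / 4 * S + (A + 1) / ν * M) ≤ ∑ i ∈ s, w i * a i := by
    have h := abs_sum_mul_le_young s (ε := ν / (2 * (A + 1))) (by positivity) w a
    have hWS : ν / (2 * (A + 1)) * W ≤ ν / 2 * S := by
      calc ν / (2 * (A + 1)) * W ≤ ν / (2 * (A + 1)) * ((A + 1) * S) := by gcongr; nlinarith
        _ = ν / 2 * S := by field_simp
    have hMe : M / (ν / (2 * (A + 1))) = 2 * ((A + 1) / ν * M) := by field_simp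
    linarith [neg_abs_le (∑ i ∈ s, w i * a i)]
  have hca : -((B + 1) / 2 * M) ≤ ∑ i ∈ s, c i * a i := by
    have h := abs_sum_mul_le_young s one_pos c a
    linarith [neg_abs_le (∑ i ∈ s, c i * a i)]
  have hqw : ν * ∑ i ∈ s, q i * w i ≤ ν ^ 2 / 2 * Q + W / 2 := by
    have h := abs_sum_mul_le_young s hν q w
    calc ν * ∑ i ∈ s, q i * w i ≤ ν * ((ν * Q + W / ν) / 2) := by
          gcongr; exact (le_abs_self _).trans h
      _ = ν ^ 2 / 2 * Q + W / 2 := by field_simp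
  have hcw : -(3 / 2 * C + W / 6) ≤ ∑ i ∈ s, c i * w i := by
    have h := abs_sum_mul_le_young s (ε := 3) (by norm_num) c w
    linarith [neg_abs_le (∑ i ∈ s, c i * w i)]
  have haw : -(3 / 2 * γ ^ 2 * M + W / 6) ≤ γ * ∑ i ∈ s, a i * w i := by
    have h := abs_sum_mul_le_young s (ε := 3 * γ) (by positivity) a w
    calc -(3 / 2 * γ ^ 2 * M + W / 6) = γ * -((3 * γ * M + W / (3 * γ)) / 2) := by
          field_simp; ring
      _ ≤ γ * ∑ i ∈ s, a i * w i := by gcongr; exact (neg_abs_le _).trans' (neg_le_neg h)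
  have htail : t * (3 / 2 * C + 3 / 2 * γ ^ 2 * M) ≤ M := by
    have hCM : 3 / 2 * C + 3 / 2 * γ ^ 2 * M ≤ 3 / 2 * (B + γ ^ 2) * M := by nlinarith
    calc t * (3 / 2 * C + 3 / 2 * γ ^ 2 * M) ≤ δ * (3 / 2 * (B + γ ^ 2) * M) :=
          mul_le_mul htδ hCM (by positivity) (ht.trans htδ)
      _ ≤ M := by nlinarith
  nlinarith [mul_le_mul_of_nonneg_right hγ hM, mul_le_mul_of_nonneg_left hqw ht,
    mul_le_mul_of_nonneg_left hcw ht, mul_le_mul_of_nonneg_left haw ht]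

theorem sum_mul_integral_nonneg {α ι : Type*} [MeasurableSpace α] {μ : Measure α} [Fintype ι]
    (c : ι → ℝ) {f : ι → α → ℝ} (hf : ∀ j, Integrable (f j) μ)
    (h : ∀ᵐ x ∂μ, 0 ≤ ∑ j, c j * f j x) : 0 ≤ ∑ j, c j * ∫ x, f j x ∂μ := by
  have hsum : ∫ x, ∑ j, c j * f j x ∂μ = ∑ j, c j * ∫ x, f j x ∂μ := by
    rw [integral_finsetSum _ fun j _ => (hf j).const_mul (c j)]
    simp_rw [integral_const_mul]
  exact hsum ▸ integral_nonneg_of_ae h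

theorem contDiffOn_pd {n : WithTop ℕ∞} {f : (Fin 3 → ℝ) → ℝ} {U : Set (Fin 3 → ℝ)}
    (hU : IsOpen U) (hf : ContDiffOn ℝ (n + 1) f U) (k : Fin 3) : ContDiffOn ℝ n (pd k f) U :=
  (hf.fderiv_of_isOpen hU le_rfl).clm_apply contDiffOn_const

/-- `((v · ∇) w)(x)`: the paper's `u₀·∇u` is `convDeriv u₀ u` and `u·∇u₀` is `convDeriv u u₀`. -/
noncomputable def convDeriv (v w : (Fin 3 → ℝ) → Fin 3 → ℝ) (x : Fin 3 → ℝ) (i : Fin 3) : ℝ :=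
  ∑ k, v x k * pd k (fun y => w y i) x

noncomputable def vecLaplacian (w : (Fin 3 → ℝ) → Fin 3 → ℝ) (x : Fin 3 → ℝ) (i : Fin 3) : ℝ :=
  ∑ k, pd k (pd k (fun y => w y i)) x

noncomputable def gradNormSq (w : (Fin 3 → ℝ) → Fin 3 → ℝ) (x : Fin 3 → ℝ) : ℝ :=
  ∑ k, ∑ i, pd k (fun y => w y i) x ^ 2

theorem gradNormSq_nonneg (w : (Fin 3 → ℝ) → Fin 3 → ℝ) (x : Fin 3 → ℝ) :
    0 ≤ gradNormSq w x := by
  unfold gradNormSq; positivity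

theorem gradNormSq_le_of_abs_pd_le {w : (Fin 3 → ℝ) → Fin 3 → ℝ} {x : Fin 3 → ℝ} {N : ℝ}
    (h : ∀ k i, |pd k (fun y => w y i) x| ≤ N) : gradNormSq w x ≤ 9 * N ^ 2 :=
  calc gradNormSq w x ≤ ∑ k : Fin 3, 3 * N ^ 2 := sum_le_sum fun k _ => by
        simpa using sum_sq_le_card_mul_sq univ fun i _ => h k i
    _ = 9 * N ^ 2 := by simp; ring

theorem sum_convDeriv_sq_le (v w : (Fin 3 → ℝ) → Fin 3 → ℝ) (x : Fin 3 → ℝ) :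
    ∑ i, convDeriv v w x i ^ 2 ≤ (∑ k, v x k ^ 2) * gradNormSq w x :=
  sum_sq_sum_mul_le _ _ _ _

theorem supg_form_lower_bound {Ω : Set (Fin 3 → ℝ)} (hΩ : MeasurableSet Ω)
    (hΩc : IsCompact (closure Ω)) {ν A B γ δ : ℝ} (hν : 0 < ν) (hA : 0 ≤ A) (hB : 0 ≤ B)
    (hγ : (A + 1) / ν + (B + 1) / 2 + 2 ≤ γ) (hδ : 3 * δ * (B + γ ^ 2) ≤ 2)
    {u₀ u : (Fin 3 → ℝ) → Fin 3 → ℝ}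
    (hu₀ : ∃ U, IsOpen U ∧ closure Ω ⊆ U ∧ ContDiffOn ℝ 1 u₀ U)
    (hu : ∃ U, IsOpen U ∧ closure Ω ⊆ U ∧ ContDiffOn ℝ 2 u U)
    (hu₀A : ∀ x ∈ Ω, ∑ k, u₀ x k ^ 2 ≤ A) (hu₀B : ∀ x ∈ Ω, gradNormSq u₀ x ≤ B)
    {τ : (Fin 3 → ℝ) → ℝ} (hτ : Measurable τ)
    (hτδ : ∀ᵐ x ∂volume.restrict Ω, 0 ≤ τ x ∧ τ x ≤ δ) :
    3 * ν / 4 * (∫ x in Ω, gradNormSq u x) + (∫ x in Ω, ∑ i, u x i ^ 2)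
        + 1 / 6 * (∫ x in Ω, τ x * ∑ i, convDeriv u₀ u x i ^ 2)
        - ν ^ 2 / 2 * (∫ x in Ω, τ x * ∑ i, vecLaplacian u x i ^ 2)
      ≤ ν * (∫ x in Ω, gradNormSq u x) + (∫ x in Ω, ∑ i, convDeriv u₀ u x i * u x i)
        + (∫ x in Ω, ∑ i, convDeriv u u₀ x i * u x i) + γ * (∫ x in Ω, ∑ i, u x i ^ 2)
        - ν * (∫ x in Ω, τ x * ∑ i, vecLaplacian u x i * convDeriv u₀ u x i)
        + (∫ x in Ω, τ x * ∑ i, convDeriv u₀ u x i ^ 2)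
        + (∫ x in Ω, τ x * ∑ i, convDeriv u u₀ x i * convDeriv u₀ u x i)
        + γ * (∫ x in Ω, τ x * ∑ i, u x i * convDeriv u₀ u x i) := by
  obtain ⟨U₀, hU₀, hΩU₀, hu₀⟩ := hu₀
  obtain ⟨U, hU, hΩU, hu⟩ := hu
  have hint (f : (Fin 3 → ℝ) → ℝ) (hf : ContinuousOn f (closure Ω)) :
      Integrable f (volume.restrict Ω) :=
    (hf.integrableOn_compact hΩc).mono_set subset_closure
  have hτint (f : (Fin 3 → ℝ) → ℝ) (hf : ContinuousOn f (closure Ω)) :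
      Integrable (fun x => τ x * f x) (volume.restrict Ω) :=
    (hint f hf).bdd_mul hτ.aestronglyMeasurable <| hτδ.mono fun x hx => by
      rw [Real.norm_eq_abs, abs_of_nonneg hx.1]; exact hx.2
  have c₀ : ContinuousOn u₀ (closure Ω) := hu₀.continuousOn.mono hΩU₀
  have c : ContinuousOn u (closure Ω) := hu.continuousOn.mono hΩU
  have c₀' (k i : Fin 3) : ContinuousOn (pd k (fun y => u₀ y i)) (closure Ω) :=
    (contDiffOn_pd (n := 0) hU₀ (contDiffOn_pi.mp hu₀ i) k).continuousOn.mono hΩU₀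
  have hpd (k i : Fin 3) : ContDiffOn ℝ 1 (pd k (fun y => u y i)) U :=
    contDiffOn_pd hU (contDiffOn_pi.mp hu i) k
  have c' (k i : Fin 3) : ContinuousOn (pd k (fun y => u y i)) (closure Ω) :=
    (hpd k i).continuousOn.mono hΩU
  have c'' (k i : Fin 3) : ContinuousOn (pd k (pd k (fun y => u y i))) (closure Ω) :=
    (contDiffOn_pd (n := 0) hU (hpd k i) k).continuousOn.mono hΩU
  -- the pointwise bound of `supg_density_lower_bound`, as `0 ≤ RHS - LHS`, term by term
  have key := sum_mul_integral_nonneg (μ := volume.restrict Ω)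
    ![ν / 4, 1, 1, γ - 1, -ν, 5 / 6, 1, γ, ν ^ 2 / 2]
    (f := ![fun x => gradNormSq u x, fun x => ∑ i, convDeriv u₀ u x i * u x i,
      fun x => ∑ i, convDeriv u u₀ x i * u x i, fun x => ∑ i, u x i ^ 2,
      fun x => τ x * ∑ i, vecLaplacian u x i * convDeriv u₀ u x i,
      fun x => τ x * ∑ i, convDeriv u₀ u x i ^ 2,
      fun x => τ x * ∑ i, convDeriv u u₀ x i * convDeriv u₀ u x i,
      fun x => τ x * ∑ i, u x i * convDeriv u₀ u x i,
      fun x => τ x * ∑ i, vecLaplacian u x i ^ 2]) ?_ ?_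
  · simp only [Fin.sum_univ_succ (n := 8), Fin.sum_univ_eight, Matrix.cons_val_succ,
      Matrix.cons_val] at key
    linarith
  · intro j
    fin_cases j <;>
      simp only [Fin.reduceFinMk, Matrix.cons_val, gradNormSq, convDeriv, vecLaplacian]
    all_goals first | exact hint _ (by fun_prop) | exact hτint _ (by fun_prop)
  · filter_upwards [ae_restrict_mem hΩ, hτδ] with x hx hτx
    have := supg_density_lower_bound univ (q := vecLaplacian u x) hν hA hB hγ hδ hτx.1 hτx.2
      (gradNormSq_nonneg u x)
      ((sum_convDeriv_sq_le u₀ u x).trans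
        (mul_le_mul_of_nonneg_right (hu₀A x hx) (gradNormSq_nonneg u x)))
      ((sum_convDeriv_sq_le u u₀ x).trans_eq (mul_comm _ _) |>.trans
        (mul_le_mul_of_nonneg_right (hu₀B x hx) (by positivity)))
    simp only [Fin.sum_univ_succ (n := 8), Fin.sum_univ_eight, Matrix.cons_val_succ,
      Matrix.cons_val]
    linarith

noncomputable def duct (L : ℝ) : Set (Fin 3 → ℝ) :=
  {x | x 0 ∈ Set.Ioo 0 1 ∧ x 1 ∈ Set.Ioo 0 1 ∧ x 2 ∈ Set.Ioo 0 L}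

theorem isOpen_duct (L : ℝ) : IsOpen (duct L) :=
  (isOpen_Ioo.preimage (continuous_apply 0)).inter
    ((isOpen_Ioo.preimage (continuous_apply 1)).inter
      (isOpen_Ioo.preimage (continuous_apply 2)))

theorem isBounded_duct (L : ℝ) : Bornology.IsBounded (duct L) := by
  refine (Metric.isBounded_Icc (0 : Fin 3 → ℝ) fun _ => max 1 L).subset ?_
  rintro x ⟨⟨h₀, h₀'⟩, ⟨h₁, h₁'⟩, ⟨h₂, h₂'⟩⟩
  refine ⟨fun i => ?_, fun i => ?_⟩ <;> fin_cases i <;> dsimp <;>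
    linarith [le_max_left 1 L, le_max_right 1 L]

theorem coercivity_SUPG_general (L ν N : ℝ) (hν : 0 < ν)
    (Ω : Set (Fin 3 → ℝ))
    (hΩ : Ω = {x : Fin 3 → ℝ | x 0 ∈ Set.Ioo (0 : ℝ) 1 ∧ x 1 ∈ Set.Ioo (0 : ℝ) 1 ∧
      x 2 ∈ Set.Ioo (0 : ℝ) L})
    (u₀ : (Fin 3 → ℝ) → (Fin 3 → ℝ))
    (hu₀ : ∃ U : Set (Fin 3 → ℝ), IsOpen U ∧ closure Ω ⊆ U ∧ ContDiffOn ℝ 1 u₀ U)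
    (hbound : ∀ x ∈ Ω, ∀ k i : Fin 3, |pd k (fun y => u₀ y i) x| ≤ N) :
    ∃ γ > (0 : ℝ), ∃ α₀ > (0 : ℝ), ∃ δ > (0 : ℝ),
      ∀ τ : (Fin 3 → ℝ) → ℝ, Measurable τ →
        (∀ᵐ x ∂(volume.restrict Ω), 0 ≤ τ x ∧ τ x ≤ δ) →
        ∀ u : (Fin 3 → ℝ) → (Fin 3 → ℝ),
          (∃ U : Set (Fin 3 → ℝ), IsOpen U ∧ closure Ω ⊆ U ∧ ContDiffOn ℝ 2 u U) →
          (∀ x ∈ closure Ω,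
            (x 2 = 0 ∨ x 0 = 0 ∨ x 0 = 1 ∨ x 1 = 0 ∨ x 1 = 1) → u x = 0) →
          (ν ^ 2 * (∫ x in Ω, τ x * ∑ i : Fin 3,
              (∑ k : Fin 3, pd k (pd k (fun y => u y i)) x) ^ 2)
            ≤ ν * ∫ x in Ω, ∑ k : Fin 3, ∑ i : Fin 3, (pd k (fun y => u y i) x) ^ 2) →
          ν * (∫ x in Ω, ∑ k : Fin 3, ∑ i : Fin 3, (pd k (fun y => u y i) x) ^ 2)
            + (∫ x in Ω, ∑ i : Fin 3,
                (∑ k : Fin 3, u₀ x k * pd k (fun y => u y i) x) * u x i)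
            + (∫ x in Ω, ∑ i : Fin 3,
                (∑ k : Fin 3, u x k * pd k (fun y => u₀ y i) x) * u x i)
            + γ * (∫ x in Ω, ∑ i : Fin 3, (u x i) ^ 2)
            - ν * (∫ x in Ω, τ x * ∑ i : Fin 3,
                (∑ k : Fin 3, pd k (pd k (fun y => u y i)) x) *
                  (∑ k : Fin 3, u₀ x k * pd k (fun y => u y i) x))
            + (∫ x in Ω, τ x * ∑ i : Fin 3,
                (∑ k : Fin 3, u₀ x k * pd k (fun y => u y i) x) ^ 2)
            + (∫ x in Ω, τ x * ∑ i : Fin 3,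
                (∑ k : Fin 3, u x k * pd k (fun y => u₀ y i) x) *
                  (∑ k : Fin 3, u₀ x k * pd k (fun y => u y i) x))
            + γ * (∫ x in Ω, τ x * ∑ i : Fin 3,
                u x i * (∑ k : Fin 3, u₀ x k * pd k (fun y => u y i) x))
          ≥ α₀ * ((∫ x in Ω, ∑ i : Fin 3, (u x i) ^ 2)
              + (∫ x in Ω, ∑ k : Fin 3, ∑ i : Fin 3, (pd k (fun y => u y i) x) ^ 2))
            + (1 / 6) * (∫ x in Ω, τ x * ∑ i : Fin 3,
                (∑ k : Fin 3, u₀ x k * pd k (fun y => u y i) x) ^ 2) := by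
  obtain rfl : Ω = duct L := hΩ
  have hΩc : IsCompact (closure (duct L)) := (isBounded_duct L).isCompact_closure
  obtain ⟨K, hK⟩ := hΩc.exists_bound_of_continuousOn
    (let ⟨_, _, hΩU, h⟩ := hu₀; h.continuousOn.mono hΩU)
  obtain ⟨γ, hγ, hγ₀⟩ : ∃ γ, (3 * K ^ 2 + 1) / ν + (9 * N ^ 2 + 1) / 2 + 2 ≤ γ ∧ 0 < γ :=
    ⟨_, le_rfl, by positivity⟩
  obtain ⟨δ, hδ, hδ₀⟩ : ∃ δ, 3 * δ * (9 * N ^ 2 + γ ^ 2) ≤ 2 ∧ 0 < δ :=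
    ⟨2 / (3 * (9 * N ^ 2 + γ ^ 2)), le_of_eq (by field_simp), by positivity⟩
  refine ⟨γ, hγ₀, min (ν / 4) 1, by positivity, δ, hδ₀, fun τ hτ hτδ u hu _ hinv => ?_⟩
  have key := supg_form_lower_bound (isOpen_duct L).measurableSet hΩc hν (by positivity)
    (by positivity) hγ hδ hu₀ hu
    (fun x hx => by simpa using sum_sq_le_card_mul_sq univ fun k _ =>
      (norm_le_pi_norm (u₀ x) k).trans (hK x (subset_closure hx)))
    (fun x hx => gradNormSq_le_of_abs_pd_le (hbound x hx)) hτ hτδ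
  have hIA : 0 ≤ ∫ x in duct L, gradNormSq u x :=
    integral_nonneg (gradNormSq_nonneg u)
  have hIM : 0 ≤ ∫ x in duct L, ∑ i, u x i ^ 2 := integral_nonneg fun x => by positivity
  simp only [gradNormSq, convDeriv, vecLaplacian] at key hIA
  linarith [mul_le_mul_of_nonneg_right (min_le_left (ν / 4) 1) hIA,
    mul_le_mul_of_nonneg_right (min_le_right (ν / 4) 1) hIM]

/-- Lemma 2 of the paper: coercivity of the SUPG-stabilized bilinear form.
For a divergence-free `C¹` base flow `u₀` with first derivatives bounded by `N` and
outflow at the outlet, there exist `γ, α₀, δ > 0` such that for every measurable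
stabilization parameter `τ` with `0 ≤ τ ≤ δ` a.e. on `Ω` and every `C²` field `u`
vanishing on the inlet and the walls which satisfies the inverse estimate
`ν²∫τ|Δu|² ≤ ν∫|∇u|²`, the SUPG form is bounded below by
`α₀(∫|u|² + ∫|∇u|²) + (1/6)∫τ|u₀·∇u|²`. -/
theorem coercivity_SUPG (L ν N : ℝ) (hL : 0 < L) (hν : 0 < ν)
    (Ω : Set (Fin 3 → ℝ))
    (hΩ : Ω = {x : Fin 3 → ℝ | x 0 ∈ Set.Ioo (0 : ℝ) 1 ∧ x 1 ∈ Set.Ioo (0 : ℝ) 1 ∧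
      x 2 ∈ Set.Ioo (0 : ℝ) L})
    (u₀ : (Fin 3 → ℝ) → (Fin 3 → ℝ))
    (hu₀ : ∃ U : Set (Fin 3 → ℝ), IsOpen U ∧ closure Ω ⊆ U ∧ ContDiffOn ℝ 1 u₀ U)
    (hdiv : ∀ x ∈ Ω, ∑ k : Fin 3, pd k (fun y => u₀ y k) x = 0)
    (hbound : ∀ x ∈ Ω, ∀ k i : Fin 3, |pd k (fun y => u₀ y i) x| ≤ N)
    (houtflow : ∀ q : ℝ × ℝ, q.1 ∈ Set.Icc (0 : ℝ) 1 → q.2 ∈ Set.Icc (0 : ℝ) 1 →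
      0 ≤ u₀ ![q.1, q.2, L] 2) :
    ∃ γ > (0 : ℝ), ∃ α₀ > (0 : ℝ), ∃ δ > (0 : ℝ),
      ∀ τ : (Fin 3 → ℝ) → ℝ, Measurable τ →
        (∀ᵐ x ∂(volume.restrict Ω), 0 ≤ τ x ∧ τ x ≤ δ) →
        ∀ u : (Fin 3 → ℝ) → (Fin 3 → ℝ),
          (∃ U : Set (Fin 3 → ℝ), IsOpen U ∧ closure Ω ⊆ U ∧ ContDiffOn ℝ 2 u U) →
          (∀ x ∈ closure Ω,
            (x 2 = 0 ∨ x 0 = 0 ∨ x 0 = 1 ∨ x 1 = 0 ∨ x 1 = 1) → u x = 0) →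
          (ν ^ 2 * (∫ x in Ω, τ x * ∑ i : Fin 3,
              (∑ k : Fin 3, pd k (pd k (fun y => u y i)) x) ^ 2)
            ≤ ν * ∫ x in Ω, ∑ k : Fin 3, ∑ i : Fin 3, (pd k (fun y => u y i) x) ^ 2) →
          ν * (∫ x in Ω, ∑ k : Fin 3, ∑ i : Fin 3, (pd k (fun y => u y i) x) ^ 2)
            + (∫ x in Ω, ∑ i : Fin 3,
                (∑ k : Fin 3, u₀ x k * pd k (fun y => u y i) x) * u x i)
            + (∫ x in Ω, ∑ i : Fin 3,
                (∑ k : Fin 3, u x k * pd k (fun y => u₀ y i) x) * u x i)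
            + γ * (∫ x in Ω, ∑ i : Fin 3, (u x i) ^ 2)
            - ν * (∫ x in Ω, τ x * ∑ i : Fin 3,
                (∑ k : Fin 3, pd k (pd k (fun y => u y i)) x) *
                  (∑ k : Fin 3, u₀ x k * pd k (fun y => u y i) x))
            + (∫ x in Ω, τ x * ∑ i : Fin 3,
                (∑ k : Fin 3, u₀ x k * pd k (fun y => u y i) x) ^ 2)
            + (∫ x in Ω, τ x * ∑ i : Fin 3,
                (∑ k : Fin 3, u x k * pd k (fun y => u₀ y i) x) *
                  (∑ k : Fin 3, u₀ x k * pd k (fun y => u y i) x))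
            + γ * (∫ x in Ω, τ x * ∑ i : Fin 3,
                u x i * (∑ k : Fin 3, u₀ x k * pd k (fun y => u y i) x))
          ≥ α₀ * ((∫ x in Ω, ∑ i : Fin 3, (u x i) ^ 2)
              + (∫ x in Ω, ∑ k : Fin 3, ∑ i : Fin 3, (pd k (fun y => u y i) x) ^ 2))
            + (1 / 6) * (∫ x in Ω, τ x * ∑ i : Fin 3,
                (∑ k : Fin 3, u₀ x k * pd k (fun y => u y i) x) ^ 2) :=
  coercivity_SUPG_general L ν N hν Ω hΩ u₀ hu₀ hbound
end
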